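/- If a clustering algorithm outputs a partition of P into clusters of size at least r such that every point p is at distance at most alpha * rho_r(p) from its cluster center, then its total k-th power distance cost is at most alpha^k * 2^(2k+1) * r times the optimal total k-th power distance cost. -/

import Mathlib

/-- The distance from `p` to its `r`-th nearest neighbor in `P`. -/
noncomputable def rhoNN {X : Type*} [MetricSpace X] (P : Finset X) (r : ℕ) (p : X) : ℝ :=
  sInf {R : ℝ | 0 ≤ R ∧ r ≤ (P.filter fun q => dist p q ≤ R).card}

/-! Since `dist p (f p) ^ k ≤ α ^ k * ρ_r(p) ^ k`, it suffices to bound `∑ ρ_r(p) ^ k` by the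
cost of `g`. Let `C` be a cluster of `g` with center `c`, `n ≥ r` points and cost `S`. By Markov's
inequality at most `n - r` points of `C` have `dist q c ^ k > S / (n - r + 1)`, so some ball around
`c` of radius `m` with `m ^ k ≤ S / (n - r + 1)` contains `r` points of `P`, and the triangle
inequality gives `ρ_r(p) ≤ dist p c + m`. As `n ≤ r (n - r + 1)`, this yields
`ρ_r(p) ^ k ≤ 2 ^ k (dist p c ^ k + r S / n)`, and summing over `C` gives at most `2 ^ k (1 + r) S`. -/

open Finset

lemma card_lt_card_filter_le_sum_div_add {ι : Type*} (s : Finset ι) {w : ι → ℝ}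
    (hw : ∀ i ∈ s, 0 ≤ w i) {D : ℕ} (hD : 0 < D) :
    #s < #{i ∈ s | w i ≤ (∑ i ∈ s, w i) / D} + D := by
  set S := ∑ i ∈ s, w i
  set bad := {i ∈ s | ¬ w i ≤ S / D}
  by_contra! h
  have hbad : D ≤ #bad := by
    have : #{i ∈ s | w i ≤ S / D} + #bad = #s := card_filter_add_card_filter_not _
    omega
  have hS : 0 ≤ S := sum_nonneg hw
  have : S < S := calc
    S = D * (S / D) := by field_simp
    _ ≤ #bad * (S / D) := by gcongr
    _ = ∑ _ ∈ bad, S / D := by rw [sum_const, nsmul_eq_mul]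
    _ < ∑ i ∈ bad, w i :=
        sum_lt_sum_of_nonempty (card_pos.mp (by omega)) fun i hi => not_le.mp (mem_filter.mp hi).2
    _ ≤ S := sum_le_sum_of_subset_of_nonneg (filter_subset _ _) fun i hi _ => hw i hi
  exact lt_irrefl _ this

lemma sum_sum_fiber_div_card {ι κ 𝕜 : Type*} [DecidableEq κ] [Semifield 𝕜] [CharZero 𝕜]
    (s : Finset ι) (g : ι → κ) (w : ι → 𝕜) :
    ∑ i ∈ s, (∑ j ∈ s with g j = g i, w j) / #{j ∈ s | g j = g i} = ∑ i ∈ s, w i := by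
  rw [sum_comp (fun b => (∑ j ∈ s with g j = b, w j) / #{j ∈ s | g j = b}) g]
  refine sum_image' _ fun i hi => ?_
  have : #{j ∈ s | g j = g i} ≠ 0 := card_ne_zero.mpr ⟨i, mem_filter.mpr ⟨hi, rfl⟩⟩
  rw [nsmul_eq_mul, mul_div_cancel₀ _ (Nat.cast_ne_zero.mpr this)]

lemma Nat.le_mul_sub_add_one {r n : ℕ} (hr : 1 ≤ r) (hrn : r ≤ n) : n ≤ r * (n - r + 1) := by
  obtain ⟨m, rfl⟩ := Nat.exists_eq_add_of_le hrn
  rw [Nat.add_sub_cancel_left, mul_add_one]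
  nlinarith

section

variable {X : Type*} [MetricSpace X] (P : Finset X) (r : ℕ)

lemma rhoNN_nonneg (p : X) : 0 ≤ rhoNN P r p :=
  Real.sInf_nonneg fun _ hR => hR.1

lemma rhoNN_le {p : X} {R : ℝ} (hR : 0 ≤ R) (h : r ≤ #{q ∈ P | dist p q ≤ R}) :
    rhoNN P r p ≤ R :=
  csInf_le ⟨0, fun _ hR => hR.1⟩ ⟨hR, h⟩

lemma rhoNN_le_dist_add {c : X} {m : ℝ} (hm : 0 ≤ m) (h : r ≤ #{q ∈ P | dist q c ≤ m}) (p : X) :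
    rhoNN P r p ≤ dist p c + m := by
  refine rhoNN_le P r (by positivity) (h.trans (card_le_card fun q hq => ?_))
  rw [mem_filter] at hq ⊢
  exact ⟨hq.1, (dist_triangle_right p q c).trans (by linarith)⟩

lemma rhoNN_pow_le {C : Finset X} (hC : C ⊆ P) (hr : 1 ≤ r) (hrC : r ≤ #C) (c p : X) (k : ℕ) :
    rhoNN P r p ^ k ≤ 2 ^ k * (dist p c ^ k + (∑ q ∈ C, dist q c ^ k) / (#C - r + 1 : ℕ)) := by
  set A := (∑ q ∈ C, dist q c ^ k) / (#C - r + 1 : ℕ)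
  set G := {q ∈ C | dist q c ^ k ≤ A}
  have hG : r ≤ #G := by
    have : #C < #G + (#C - r + 1) :=
      card_lt_card_filter_le_sum_div_add C (fun q _ => by positivity) (Nat.succ_pos _)
    omega
  obtain ⟨q₀, hq₀, hq₀_max⟩ := G.exists_max_image (dist · c) (card_pos.mp (by omega))
  have hball : r ≤ #{q ∈ P | dist q c ≤ dist q₀ c} := by
    refine hG.trans (card_le_card fun q hq => ?_)
    exact mem_filter.mpr ⟨hC (mem_filter.mp hq).1, hq₀_max q hq⟩
  calc rhoNN P r p ^ k ≤ (dist p c + dist q₀ c) ^ k :=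
        pow_le_pow_left₀ (rhoNN_nonneg P r p) (rhoNN_le_dist_add P r dist_nonneg hball p) k
    _ ≤ 2 ^ (k - 1) * (dist p c ^ k + dist q₀ c ^ k) := add_pow_le dist_nonneg dist_nonneg k
    _ ≤ 2 ^ k * (dist p c ^ k + A) := by
        gcongr
        · exact one_le_two
        · omega
        · exact (mem_filter.mp hq₀).2

theorem sum_rhoNN_pow_le [DecidableEq X] (hr : 1 ≤ r) (k : ℕ) (g : X → X)
    (hg : ∀ p ∈ P, r ≤ #{q ∈ P | g q = g p}) :
    ∑ p ∈ P, rhoNN P r p ^ k ≤ 2 ^ (k + 1) * r * ∑ p ∈ P, dist p (g p) ^ k := by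
  set T := ∑ p ∈ P, dist p (g p) ^ k
  have hpt : ∀ p ∈ P, rhoNN P r p ^ k ≤ 2 ^ k * (dist p (g p) ^ k +
      r * ((∑ q ∈ P with g q = g p, dist q (g q) ^ k) / #{q ∈ P | g q = g p})) := by
    intro p hp
    set n := #{q ∈ P | g q = g p}
    set S := ∑ q ∈ P with g q = g p, dist q (g q) ^ k
    have hcost : ∑ q ∈ P with g q = g p, dist q (g p) ^ k = S :=
      sum_congr rfl fun q hq => by rw [(mem_filter.mp hq).2]
    have hn : (0 : ℝ) < n := by exact_mod_cast hr.trans (hg p hp)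
    have hdiv : S / (n - r + 1 : ℕ) ≤ r * (S / n) := by
      have hS : 0 ≤ S := sum_nonneg fun q _ => by positivity
      rw [← mul_div_assoc, div_le_div_iff₀ (by positivity) hn]
      calc S * n ≤ S * (r * (n - r + 1 : ℕ)) := by
            gcongr
            exact_mod_cast Nat.le_mul_sub_add_one hr (hg p hp)
        _ = r * S * (n - r + 1 : ℕ) := by ring
    have := rhoNN_pow_le P r (filter_subset _ P) hr (hg p hp) (g p) p k
    rw [hcost] at this
    exact this.trans (by gcongr)
  have hT : 0 ≤ T := sum_nonneg fun p _ => by positivity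
  calc ∑ p ∈ P, rhoNN P r p ^ k
      ≤ ∑ p ∈ P, 2 ^ k * (dist p (g p) ^ k +
          r * ((∑ q ∈ P with g q = g p, dist q (g q) ^ k) / #{q ∈ P | g q = g p})) :=
        sum_le_sum hpt
    _ = 2 ^ k * (T + r * T) := by
        rw [← mul_sum, sum_add_distrib, ← mul_sum, sum_sum_fiber_div_card]
    _ ≤ 2 ^ (k + 1) * r * T := by
        have : (1 : ℝ) ≤ r := by exact_mod_cast hr
        have := mul_nonneg (mul_nonneg (pow_pos (two_pos (α := ℝ)) k).le hT) (sub_nonneg.mpr this)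
        rw [pow_succ]
        linarith

end

open Classical in
theorem stmt6_general {X : Type*} [MetricSpace X] (P : Finset X) (r k : ℕ) (hr : 1 ≤ r)
    (α : ℝ) (hα : 1 ≤ α)
    (f : X → X)
    (hpt : ∀ p ∈ P, dist p (f p) ≤ α * rhoNN P r p)
    (g : X → X) (hg : ∀ p ∈ P, r ≤ (P.filter fun q => g q = g p).card) :
    ∑ p ∈ P, dist p (f p) ^ k ≤
      α ^ k * 2 ^ (2 * k + 1) * (r : ℝ) * ∑ p ∈ P, dist p (g p) ^ k := by
  have hαk : 0 ≤ α ^ k := pow_nonneg (zero_le_one.trans hα) k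
  have hT : 0 ≤ ∑ p ∈ P, dist p (g p) ^ k := sum_nonneg fun p _ => by positivity
  calc ∑ p ∈ P, dist p (f p) ^ k
      ≤ ∑ p ∈ P, α ^ k * rhoNN P r p ^ k := sum_le_sum fun p hp => by
        rw [← mul_pow]
        exact pow_le_pow_left₀ dist_nonneg (hpt p hp) k
    _ ≤ α ^ k * (2 ^ (k + 1) * r * ∑ p ∈ P, dist p (g p) ^ k) := by
        rw [← mul_sum]
        exact mul_le_mul_of_nonneg_left (sum_rhoNN_pow_le P r hr k g hg) hαk
    _ ≤ α ^ k * 2 ^ (2 * k + 1) * r * ∑ p ∈ P, dist p (g p) ^ k := by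
        rw [mul_assoc, mul_assoc, mul_assoc (α ^ k)]
        gcongr
        · exact one_le_two
        · omega

open Classical in
/-- If a clustering `f` of `P` into clusters of size at least `r` places every point
`p` at distance at most `α · ρ_r(p)` from its center, then its total `k`-th power
distance cost is at most `α^k · 2^(2k+1) · r` times the optimum (i.e. at most that
factor times the cost of any valid clustering `g`). -/
theorem stmt6 {X : Type*} [MetricSpace X] (P : Finset X) (r k : ℕ) (hr : 1 ≤ r)
    (hk : 1 ≤ k) (hcard : r ≤ P.card) (α : ℝ) (hα : 1 ≤ α)
    (f : X → X) (hf : ∀ p ∈ P, r ≤ (P.filter fun q => f q = f p).card)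
    (hpt : ∀ p ∈ P, dist p (f p) ≤ α * rhoNN P r p)
    (g : X → X) (hg : ∀ p ∈ P, r ≤ (P.filter fun q => g q = g p).card) :
    ∑ p ∈ P, dist p (f p) ^ k ≤
      α ^ k * 2 ^ (2 * k + 1) * (r : ℝ) * ∑ p ∈ P, dist p (g p) ^ k :=
  stmt6_general P r k hr α hα f hpt g hg
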